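/- Let t > 0 and let f : ℝ → ℝ be four times continuously differentiable with bounded fourth derivative. Then lim_{n→∞} n² · ( ∫ f(x) dΓ(n, n/t)(x) − f(t) − (t²/(2n)) f''(t) ) = (t⁴/8) f⁽⁴⁾(t) + (t³/3) f⁽³⁾(t). -/

import Mathlib

/-!
Expand `f` to fourth order at `t`. The central moments of `Γ(n, n/t)` are `t²/n`, `2t³/n²` and
`3t⁴(n+2)/n³`, so integrating the Taylor polynomial yields the limit up to an `O(1/n)` term. In
Lagrange's form the remainder is `(f⁽⁴⁾(ξ) - f⁽⁴⁾(t)) (x - t)⁴ / 24` with `ξ` between `t` and `x`;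
continuity of `f⁽⁴⁾` at `t` and its boundedness give `|R x| ≤ ε (x - t)⁴ + C_ε (x - t)⁶` for every
`ε > 0`, and since `n² E(X - t)⁴ → 3t⁴` while `n² E(X - t)⁶ → 0`, the remainder contributes
nothing in the limit.
-/

open MeasureTheory ProbabilityTheory Filter Topology Finset Set
open scoped Nat

lemma Real.Gamma_add_nat_eq_ascPochhammer_eval_mul {a : ℝ} (ha : 0 < a) (k : ℕ) :
    Real.Gamma (a + k) = (ascPochhammer ℝ k).eval a * Real.Gamma a := by
  induction k with
  | zero => simp
  | succ k ih =>
    rw [Nat.cast_succ, ← add_assoc, Real.Gamma_add_one (by positivity), ih,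
      ascPochhammer_succ_eval]
    ring

section GammaMoments

variable {a r : ℝ}

lemma gammaPDFReal_mul_pow (ha : 0 < a) (hr : 0 < r) (k : ℕ) (x : ℝ) :
    gammaPDFReal a r x * x ^ k
      = (ascPochhammer ℝ k).eval a / r ^ k * gammaPDFReal (a + k) r x := by
  unfold gammaPDFReal
  rcases lt_or_ge x 0 with hx | hx
  · simp [hx.not_ge]
  rcases hx.eq_or_lt with rfl | hx
  · rcases k.eq_zero_or_pos with rfl | hk
    · simp
    · have : a + k - 1 ≠ 0 := by have : (1 : ℝ) ≤ k := mod_cast hk; linarith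
      simp [hk.ne', Real.zero_rpow this]
  have hP := ascPochhammer_pos k a ha
  simp only [hx.le, if_true, Real.Gamma_add_nat_eq_ascPochhammer_eval_mul ha,
    Real.rpow_add hr, Real.rpow_natCast]
  rw [show a + k - 1 = (a - 1) + k by ring, Real.rpow_add hx, Real.rpow_natCast]
  have := (Real.Gamma_pos_of_pos ha).ne'
  field_simp

lemma measurable_gammaPDF : Measurable (gammaPDF a r) :=
  (measurable_gammaPDFReal a r).ennreal_ofReal

lemma integral_gammaPDFReal (ha : 0 < a) (hr : 0 < r) : ∫ x, gammaPDFReal a r x = 1 := by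
  rw [integral_eq_lintegral_of_nonneg_ae (ae_of_all _ (gammaPDFReal_nonneg ha hr))
    (measurable_gammaPDFReal a r).aestronglyMeasurable, show (∫⁻ x, ENNReal.ofReal
    (gammaPDFReal a r x)) = 1 from lintegral_gammaPDF_eq_one ha hr, ENNReal.toReal_one]

lemma integrable_gammaPDFReal (ha : 0 < a) (hr : 0 < r) : Integrable (gammaPDFReal a r) :=
  integrable_of_integral_eq_one (integral_gammaPDFReal ha hr)

lemma integral_gammaMeasure (ha : 0 < a) (hr : 0 < r) (g : ℝ → ℝ) :
    ∫ x, g x ∂gammaMeasure a r = ∫ x, gammaPDFReal a r x * g x := by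
  rw [gammaMeasure, integral_withDensity_eq_integral_toReal_smul
    measurable_gammaPDF (ae_of_all _ fun _ => ENNReal.ofReal_lt_top)]
  simp [gammaPDF, ENNReal.toReal_ofReal (gammaPDFReal_nonneg ha hr _)]

lemma integrable_gammaMeasure_iff (ha : 0 < a) (hr : 0 < r) {g : ℝ → ℝ} :
    Integrable g (gammaMeasure a r) ↔ Integrable fun x => gammaPDFReal a r x * g x := by
  rw [gammaMeasure, integrable_withDensity_iff_integrable_smul'
    measurable_gammaPDF (ae_of_all _ fun _ => ENNReal.ofReal_lt_top)]
  simp [gammaPDF, ENNReal.toReal_ofReal (gammaPDFReal_nonneg ha hr _)]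

lemma integrable_pow_gammaMeasure (ha : 0 < a) (hr : 0 < r) (k : ℕ) :
    Integrable (fun x => x ^ k) (gammaMeasure a r) := by
  simp_rw [integrable_gammaMeasure_iff ha hr, gammaPDFReal_mul_pow ha hr]
  exact (integrable_gammaPDFReal (by positivity) hr).const_mul _

lemma integral_pow_gammaMeasure (ha : 0 < a) (hr : 0 < r) (k : ℕ) :
    ∫ x, x ^ k ∂gammaMeasure a r = (ascPochhammer ℝ k).eval a / r ^ k := by
  simp_rw [integral_gammaMeasure ha hr, gammaPDFReal_mul_pow ha hr, integral_const_mul,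
    integral_gammaPDFReal (by positivity : 0 < a + k) hr, mul_one]

lemma integrable_sub_pow_gammaMeasure (ha : 0 < a) (hr : 0 < r) (t : ℝ) (k : ℕ) :
    Integrable (fun x => (x - t) ^ k) (gammaMeasure a r) := by
  simp_rw [sub_eq_add_neg, add_pow]
  exact integrable_finsetSum _ fun j _ =>
    ((integrable_pow_gammaMeasure ha hr j).mul_const _).mul_const _

lemma integral_sub_pow_gammaMeasure (ha : 0 < a) (hr : 0 < r) (t : ℝ) (k : ℕ) :
    ∫ x, (x - t) ^ k ∂gammaMeasure a r
      = ∑ j ∈ range (k + 1),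
          (ascPochhammer ℝ j).eval a / r ^ j * (-t) ^ (k - j) * k.choose j := by
  simp_rw [sub_eq_add_neg, add_pow]
  rw [integral_finsetSum _ fun j _ =>
    ((integrable_pow_gammaMeasure ha hr j).mul_const _).mul_const _]
  simp_rw [integral_mul_const, integral_pow_gammaMeasure ha hr]

end GammaMoments

section RandomisationMoments

variable {a t : ℝ}

lemma integral_sub_pow_one_gammaMeasure (ha : 0 < a) (ht : 0 < t) :
    ∫ x, (x - t) ^ 1 ∂gammaMeasure a (a / t) = 0 := by
  rw [integral_sub_pow_gammaMeasure ha (by positivity)]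
  simp only [sum_range_succ, sum_range_zero, ascPochhammer_succ_eval, ascPochhammer_zero,
    Polynomial.eval_one, Nat.choose]
  field_simp
  ring

lemma integral_sub_pow_two_gammaMeasure (ha : 0 < a) (ht : 0 < t) :
    ∫ x, (x - t) ^ 2 ∂gammaMeasure a (a / t) = t ^ 2 / a := by
  rw [integral_sub_pow_gammaMeasure ha (by positivity)]
  simp only [sum_range_succ, sum_range_zero, ascPochhammer_succ_eval, ascPochhammer_zero,
    Polynomial.eval_one, Nat.choose]
  field_simp
  ring

lemma integral_sub_pow_three_gammaMeasure (ha : 0 < a) (ht : 0 < t) :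
    ∫ x, (x - t) ^ 3 ∂gammaMeasure a (a / t) = 2 * t ^ 3 / a ^ 2 := by
  rw [integral_sub_pow_gammaMeasure ha (by positivity)]
  simp only [sum_range_succ, sum_range_zero, ascPochhammer_succ_eval, ascPochhammer_zero,
    Polynomial.eval_one, Nat.choose]
  field_simp
  ring

lemma integral_sub_pow_four_gammaMeasure (ha : 0 < a) (ht : 0 < t) :
    ∫ x, (x - t) ^ 4 ∂gammaMeasure a (a / t) = 3 * t ^ 4 * (a + 2) / a ^ 3 := by
  rw [integral_sub_pow_gammaMeasure ha (by positivity)]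
  simp only [sum_range_succ, sum_range_zero, ascPochhammer_succ_eval, ascPochhammer_zero,
    Polynomial.eval_one, Nat.choose]
  field_simp
  ring

lemma integral_sub_pow_six_gammaMeasure (ha : 0 < a) (ht : 0 < t) :
    ∫ x, (x - t) ^ 6 ∂gammaMeasure a (a / t)
      = 5 * t ^ 6 * (3 * a ^ 2 + 26 * a + 24) / a ^ 5 := by
  rw [integral_sub_pow_gammaMeasure ha (by positivity)]
  simp only [sum_range_succ, sum_range_zero, ascPochhammer_succ_eval, ascPochhammer_zero,
    Polynomial.eval_one, Nat.choose]
  field_simp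
  ring

lemma tendsto_sq_mul_integral_sub_pow_four_gammaMeasure (ht : 0 < t) :
    Tendsto (fun n : ℕ => (n : ℝ) ^ 2 * ∫ x, (x - t) ^ 4 ∂gammaMeasure n (n / t)) atTop
      (𝓝 (3 * t ^ 4)) := by
  have h := ((show Continuous fun s : ℝ => 3 * t ^ 4 * (1 + 2 * s) by fun_prop
    ).tendsto' 0 (3 * t ^ 4) (by simp)).comp (tendsto_inv_atTop_nhds_zero_nat (𝕜 := ℝ))
  refine h.congr' ?_
  filter_upwards [eventually_gt_atTop 0] with n hn
  rw [Function.comp_apply, integral_sub_pow_four_gammaMeasure (by positivity) ht]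
  field_simp

lemma tendsto_sq_mul_integral_sub_pow_six_gammaMeasure (ht : 0 < t) :
    Tendsto (fun n : ℕ => (n : ℝ) ^ 2 * ∫ x, (x - t) ^ 6 ∂gammaMeasure n (n / t)) atTop
      (𝓝 0) := by
  have h := ((show Continuous fun s : ℝ => 5 * t ^ 6 * s * (3 + 26 * s + 24 * s ^ 2) by
    fun_prop).tendsto' 0 0 (by simp)).comp (tendsto_inv_atTop_nhds_zero_nat (𝕜 := ℝ))
  refine h.congr' ?_
  filter_upwards [eventually_gt_atTop 0] with n hn
  rw [Function.comp_apply, integral_sub_pow_six_gammaMeasure (by positivity) ht]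
  field_simp

end RandomisationMoments

lemma taylorWithinEval_eq_taylorWithinEval_univ {f : ℝ → ℝ} {n : ℕ} {s : Set ℝ} {x₀ : ℝ}
    (hs : UniqueDiffOn ℝ s) (hx₀ : x₀ ∈ s) (hf : ContDiffAt ℝ n f x₀) (x : ℝ) :
    taylorWithinEval f n s x₀ x = taylorWithinEval f n univ x₀ x := by
  simp only [taylor_within_apply, iteratedDerivWithin_univ]
  refine sum_congr rfl fun k hk => ?_
  rw [iteratedDerivWithin_eq_iteratedDeriv hs (hf.of_le ?_) hx₀]
  exact_mod_cast Nat.lt_succ_iff.mp (mem_range.mp hk)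

lemma exists_sub_taylorWithinEval_univ_eq {f : ℝ → ℝ} {n : ℕ} (hf : ContDiff ℝ (n + 1) f)
    (x₀ x : ℝ) : ∃ ξ, |ξ - x₀| ≤ |x - x₀| ∧ f x - taylorWithinEval f (n + 1) univ x₀ x
      = (iteratedDeriv (n + 1) f ξ - iteratedDeriv (n + 1) f x₀) * (x - x₀) ^ (n + 1)
        / (n + 1)! := by
  rcases eq_or_ne x₀ x with rfl | hx
  · exact ⟨x₀, le_rfl, by simp [taylorWithinEval_self]⟩
  obtain ⟨ξ, hξ, h⟩ := taylor_mean_remainder_lagrange_iteratedDeriv hx hf.contDiffOn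
  refine ⟨ξ, abs_sub_left_of_mem_uIcc (uIoo_subset_uIcc_self hξ), ?_⟩
  rw [taylorWithinEval_succ, ← taylorWithinEval_eq_taylorWithinEval_univ (uniqueDiffOn_uIcc hx)
    left_mem_uIcc (hf.of_le (by norm_cast; omega)).contDiffAt, iteratedDerivWithin_univ,
    smul_eq_mul, sub_add_eq_sub_sub, h, Nat.factorial_succ, Nat.cast_mul]
  push_cast
  ring

lemma abs_sub_le_add_mul_sq_div {g : ℝ → ℝ} {M δ ε t : ℝ} (hM : ∀ y, |g y| ≤ M) (hδ : 0 < δ)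
    (hε : ∀ y, |y - t| < δ → |g y - g t| ≤ ε) (y : ℝ) :
    |g y - g t| ≤ ε + 2 * M * ((y - t) / δ) ^ 2 := by
  have hM₀ : 0 ≤ M := (abs_nonneg _).trans (hM t)
  have hε₀ : 0 ≤ ε := (abs_nonneg _).trans (hε t (by simpa using hδ))
  rcases lt_or_ge |y - t| δ with hy | hy
  · have : 0 ≤ 2 * M * ((y - t) / δ) ^ 2 := by positivity
    linarith [hε y hy]
  · have h1 : 1 ≤ ((y - t) / δ) ^ 2 := by
      rw [div_pow, one_le_div (by positivity), ← sq_abs (y - t)]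
      exact pow_le_pow_left₀ hδ.le hy 2
    calc |g y - g t| ≤ |g y| + |g t| := abs_sub _ _
      _ ≤ 2 * M * 1 := by linarith [hM y, hM t]
      _ ≤ ε + 2 * M * ((y - t) / δ) ^ 2 := by nlinarith

lemma exists_abs_sub_taylorWithinEval_le {f : ℝ → ℝ} {n : ℕ} {M : ℝ}
    (hf : ContDiff ℝ (n + 1) f) (hM : ∀ y, |iteratedDeriv (n + 1) f y| ≤ M) (x₀ : ℝ) {ε : ℝ}
    (hε : 0 < ε) :
    ∃ C, ∀ x, |f x - taylorWithinEval f (n + 1) univ x₀ x|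
      ≤ ε * |x - x₀| ^ (n + 1) + C * |x - x₀| ^ (n + 3) := by
  obtain ⟨δ, hδ, hloc⟩ := Metric.continuousAt_iff.mp
    ((hf.continuous_iteratedDeriv (n + 1) le_rfl).continuousAt (x := x₀)) ε hε
  refine ⟨2 * M / δ ^ 2, fun x => ?_⟩
  obtain ⟨ξ, hξ, hR⟩ := exists_sub_taylorWithinEval_univ_eq hf x₀ x
  have hmod := abs_sub_le_add_mul_sq_div hM hδ (fun y hy => (hloc hy).le) ξ
  have hξx : ((ξ - x₀) / δ) ^ 2 ≤ ((x - x₀) / δ) ^ 2 :=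
    sq_le_sq.mpr (by rw [abs_div, abs_div, abs_of_pos hδ]; gcongr)
  have hfac : (1 : ℝ) ≤ (n + 1)! := Nat.one_le_cast.mpr (n + 1).factorial_pos
  set g := iteratedDeriv (n + 1) f
  calc |f x - taylorWithinEval f (n + 1) univ x₀ x|
      = |g ξ - g x₀| * |x - x₀| ^ (n + 1) / (n + 1)! := by
        rw [hR, abs_div, abs_mul, abs_pow, Nat.abs_cast]
    _ ≤ |g ξ - g x₀| * |x - x₀| ^ (n + 1) := div_le_self (by positivity) hfac
    _ ≤ (ε + 2 * M * ((x - x₀) / δ) ^ 2) * |x - x₀| ^ (n + 1) := by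
        gcongr
        have hM₀ : 0 ≤ M := (abs_nonneg _).trans (hM x₀)
        exact hmod.trans (by gcongr)
    _ = ε * |x - x₀| ^ (n + 1) + 2 * M / δ ^ 2 * |x - x₀| ^ (n + 3) := by
        rw [div_pow, ← sq_abs (x - x₀)]
        ring

lemma continuous_taylorWithinEval (f : ℝ → ℝ) (n : ℕ) (s : Set ℝ) (x₀ : ℝ) :
    Continuous fun x => taylorWithinEval f n s x₀ x := by
  simp_rw [taylor_within_apply]
  fun_prop

lemma tendsto_nhds_zero_of_forall_abs_le {ι : Type*} {l : Filter ι} {u : ι → ℝ} {A : ℝ}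
    (h : ∀ ε > 0, ∃ v : ι → ℝ, Tendsto v l (𝓝 (A * ε)) ∧ ∀ᶠ i in l, |u i| ≤ v i) :
    Tendsto u l (𝓝 0) := by
  refine Metric.tendsto_nhds.mpr fun η hη => ?_
  have hA : 0 < |A| + 1 := by positivity
  obtain ⟨v, hv, huv⟩ := h (η / (|A| + 1)) (by positivity)
  have hlt : A * (η / (|A| + 1)) < η := by
    rw [mul_div_assoc', div_lt_iff₀ hA]
    nlinarith [le_abs_self A]
  filter_upwards [huv, hv.eventually (eventually_lt_nhds hlt)] with i hui hvi
  simpa [Real.dist_eq] using hui.trans_lt hvi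

section Randomisation

variable {t : ℝ}

lemma integrable_taylorWithinEval_gammaMeasure {a r : ℝ} (ha : 0 < a) (hr : 0 < r)
    (f : ℝ → ℝ) (n : ℕ) (s : Set ℝ) (x₀ : ℝ) :
    Integrable (fun x => taylorWithinEval f n s x₀ x) (gammaMeasure a r) := by
  simp_rw [taylor_within_apply, smul_eq_mul, mul_assoc]
  exact integrable_finsetSum _ fun k _ =>
    ((integrable_sub_pow_gammaMeasure ha hr x₀ k).mul_const _).const_mul _

lemma integral_taylorWithinEval_gammaMeasure {a : ℝ} (ha : 0 < a) (ht : 0 < t) (f : ℝ → ℝ) :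
    ∫ x, taylorWithinEval f 4 univ t x ∂gammaMeasure a (a / t)
      = f t + t ^ 2 / (2 * a) * iteratedDeriv 2 f t + t ^ 3 / (3 * a ^ 2) * iteratedDeriv 3 f t
        + t ^ 4 * (a + 2) / (8 * a ^ 3) * iteratedDeriv 4 f t := by
  have hr : 0 < a / t := by positivity
  have := isProbabilityMeasure_gammaMeasure ha hr
  simp_rw [taylor_within_apply, iteratedDerivWithin_univ, smul_eq_mul, mul_assoc]
  rw [integral_finsetSum _ fun k _ =>
    ((integrable_sub_pow_gammaMeasure ha hr t k).mul_const _).const_mul _]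
  simp_rw [integral_const_mul, integral_mul_const]
  simp only [sum_range_succ, sum_range_zero, pow_zero, integral_const, probReal_univ,
    integral_sub_pow_one_gammaMeasure ha ht, integral_sub_pow_two_gammaMeasure ha ht,
    integral_sub_pow_three_gammaMeasure ha ht, integral_sub_pow_four_gammaMeasure ha ht,
    Nat.factorial, iteratedDeriv_zero, mul_zero, zero_mul, add_zero]
  push_cast
  field_simp
  ring

lemma integral_gammaMeasure_eq_add_integral_sub_taylorWithinEval {a : ℝ} (ha : 0 < a)
    (ht : 0 < t) {f : ℝ → ℝ}
    (hR : Integrable (fun x => f x - taylorWithinEval f 4 univ t x) (gammaMeasure a (a / t))) :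
    ∫ x, f x ∂gammaMeasure a (a / t)
      = f t + t ^ 2 / (2 * a) * iteratedDeriv 2 f t + t ^ 3 / (3 * a ^ 2) * iteratedDeriv 3 f t
        + t ^ 4 * (a + 2) / (8 * a ^ 3) * iteratedDeriv 4 f t
        + ∫ x, f x - taylorWithinEval f 4 univ t x ∂gammaMeasure a (a / t) := by
  rw [← integral_taylorWithinEval_gammaMeasure ha ht, ← integral_add
    (integrable_taylorWithinEval_gammaMeasure ha (by positivity) f 4 univ t) hR]
  simp

lemma integrable_gammaMeasure_of_abs_le {a r : ℝ} (ha : 0 < a) (hr : 0 < r) {R : ℝ → ℝ}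
    (hR : Measurable R) {ε C : ℝ} (hbound : ∀ x, |R x| ≤ ε * (x - t) ^ 4 + C * (x - t) ^ 6) :
    Integrable R (gammaMeasure a r) :=
  (((integrable_sub_pow_gammaMeasure ha hr t 4).const_mul ε).add
    ((integrable_sub_pow_gammaMeasure ha hr t 6).const_mul C)).mono' hR.aestronglyMeasurable
    (ae_of_all _ hbound)

lemma tendsto_sq_mul_integral_gammaMeasure (ht : 0 < t) {R : ℝ → ℝ}
    (hbound : ∀ ε > 0, ∃ C, ∀ x, |R x| ≤ ε * (x - t) ^ 4 + C * (x - t) ^ 6) :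
    Tendsto (fun n : ℕ => (n : ℝ) ^ 2 * ∫ x, R x ∂gammaMeasure n (n / t)) atTop (𝓝 0) := by
  refine tendsto_nhds_zero_of_forall_abs_le (A := 3 * t ^ 4) fun ε hε => ?_
  obtain ⟨C, hC⟩ := hbound ε hε
  refine ⟨fun n : ℕ => ε * ((n : ℝ) ^ 2 * ∫ x, (x - t) ^ 4 ∂gammaMeasure n (n / t))
    + C * ((n : ℝ) ^ 2 * ∫ x, (x - t) ^ 6 ∂gammaMeasure n (n / t)), ?_, ?_⟩
  · simpa [mul_comm] using
      ((tendsto_sq_mul_integral_sub_pow_four_gammaMeasure ht).const_mul ε).add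
        ((tendsto_sq_mul_integral_sub_pow_six_gammaMeasure ht).const_mul C)
  filter_upwards [eventually_gt_atTop 0] with n hn
  have hn' : (0 : ℝ) < n := mod_cast hn
  have hr : 0 < n / t := by positivity
  have h4 := (integrable_sub_pow_gammaMeasure hn' hr t 4).const_mul ε
  have h6 := (integrable_sub_pow_gammaMeasure hn' hr t 6).const_mul C
  calc |(n : ℝ) ^ 2 * ∫ x, R x ∂gammaMeasure n (n / t)|
      = (n : ℝ) ^ 2 * ‖∫ x, R x ∂gammaMeasure n (n / t)‖ := by
        rw [abs_mul, abs_of_nonneg (by positivity), Real.norm_eq_abs]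
    _ ≤ (n : ℝ) ^ 2 * ∫ x, ε * (x - t) ^ 4 + C * (x - t) ^ 6 ∂gammaMeasure n (n / t) := by
        gcongr
        exact norm_integral_le_of_norm_le (h4.add h6) (ae_of_all _ hC)
    _ = _ := by
        rw [integral_add h4 h6, integral_const_mul, integral_const_mul]
        ring

end Randomisation

/-- Second-order randomisation error: for `t > 0` and `f` of class `C⁴` with bounded fourth
derivative,
`n² (∫ f dΓ(n,n/t) - f(t) - (t²/(2n)) f''(t)) → (t⁴/8) f⁽⁴⁾(t) + (t³/3) f⁽³⁾(t)`. -/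
theorem gamma_randomisation_second_order (t : ℝ) (ht : 0 < t) (f : ℝ → ℝ)
    (hf : ContDiff ℝ 4 f)
    (hf_bdd : ∃ M : ℝ, ∀ x : ℝ, |iteratedDeriv 4 f x| ≤ M) :
    Tendsto (fun n : ℕ =>
        (n : ℝ) ^ 2 *
          ((∫ x, f x ∂(gammaMeasure n ((n : ℝ) / t))) - f t -
            t ^ 2 / (2 * n) * iteratedDeriv 2 f t))
      atTop
      (nhds (t ^ 4 / 8 * iteratedDeriv 4 f t + t ^ 3 / 3 * iteratedDeriv 3 f t)) := by
  obtain ⟨M, hM⟩ := hf_bdd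
  set R : ℝ → ℝ := fun x => f x - taylorWithinEval f 4 univ t x
  have hR_meas : Measurable R :=
    (hf.continuous.sub (continuous_taylorWithinEval f 4 univ t)).measurable
  have hR_bound : ∀ ε > 0, ∃ C, ∀ x, |R x| ≤ ε * (x - t) ^ 4 + C * (x - t) ^ 6 := fun ε hε => by
    simpa only [Even.pow_abs (by decide : Even 4), Even.pow_abs (by decide : Even 6)] using
      exists_abs_sub_taylorWithinEval_le (n := 3) hf hM t hε
  have hsplit : ∀ᶠ n : ℕ in atTop,
      t ^ 4 / 8 * (1 + 2 / n) * iteratedDeriv 4 f t + t ^ 3 / 3 * iteratedDeriv 3 f t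
        + (n : ℝ) ^ 2 * ∫ x, R x ∂gammaMeasure n (n / t)
      = (n : ℝ) ^ 2 * ((∫ x, f x ∂gammaMeasure n (n / t)) - f t
          - t ^ 2 / (2 * n) * iteratedDeriv 2 f t) := by
    filter_upwards [eventually_gt_atTop 0] with n hn
    have hn' : (0 : ℝ) < n := mod_cast hn
    obtain ⟨C, hC⟩ := hR_bound 1 one_pos
    rw [integral_gammaMeasure_eq_add_integral_sub_taylorWithinEval hn' ht
      (integrable_gammaMeasure_of_abs_le hn' (by positivity) hR_meas hC)]
    field_simp
    ring
  have hcoef : Tendsto (fun n : ℕ => t ^ 4 / 8 * (1 + 2 / (n : ℝ))) atTop (𝓝 (t ^ 4 / 8)) := by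
    simpa using ((tendsto_const_div_atTop_nhds_zero_nat (2 : ℝ)).const_add 1).const_mul (t ^ 4 / 8)
  refine Tendsto.congr' hsplit ?_
  simpa using ((hcoef.mul_const _).add_const _).add
    (tendsto_sq_mul_integral_gammaMeasure ht hR_bound)
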